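/- arXiv:math/0007052 — 3 statements merged into one kernel-verified Lean document; each statement's English description precedes it below -/
import Mathlib

section
/- Under the same setup, define for each integer q ≥ 1 the bilinear map r^q_ρ(u,v) := (-1/4)^q Σ_{l_1,...,l_{q-1}} π_ρ([u,e_{l_1}]) π_ρ([e_{l_1},e_{l_2}]) ⋯ π_ρ([e_{l_{q-1}},v]) ∈ End(V_ρ), with r^0_ρ(u,v) := ⟨u,v⟩·Id. Then for every q ≥ 0 and all u,v ∈ R^n: Σ_k m(λ_k)^q (p_{λ_k}(u))* p_{λ_k}(v) = r^q_ρ(u,v). -/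
open scoped RealInnerProductSpace

/-! Induction on `q`. Writing `p_k(u) = Pr k ∘ ι.flip u`, the eigenvector relation turns one
factor `m_k` in `m_k^{q+1} p_k(u)* p_k(v)` into `Σ_l p_k(u)* p_k(e_l) ∘ (-¼ π(e_l, v))`; summing
over `k` and using the induction hypothesis at `(u, e_l)` gives exactly the recursion defining
`r^{q+1}(u, v)`. The base case is the completeness relation. -/

/-- The bilinear maps `r^q_ρ(u,v) := (-1/4)^q Σ_{l₁,…,l_{q-1}}
π([u,e_{l₁}]) π([e_{l₁},e_{l₂}]) ⋯ π([e_{l_{q-1}},v])`, with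
`r^0_ρ(u,v) = ⟪u,v⟫·Id`, defined by the equivalent recursion
`r^{q+1}(u,v) = Σ_l r^q(u, e_l) ∘ (-(1/4) π([e_l, v]))`. -/
noncomputable def cliffordR {n : ℕ} {V : Type*} [AddCommGroup V] [Module ℝ V]
    (π : EuclideanSpace ℝ (Fin n) →ₗ[ℝ] EuclideanSpace ℝ (Fin n) →ₗ[ℝ] Module.End ℝ V)
    (b : OrthonormalBasis (Fin n) ℝ (EuclideanSpace ℝ (Fin n))) :
    ℕ → EuclideanSpace ℝ (Fin n) → EuclideanSpace ℝ (Fin n) → Module.End ℝ V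
  | 0 => fun u v => ⟪u, v⟫ • (1 : Module.End ℝ V)
  | (q + 1) => fun u v => ∑ l, cliffordR π b q u (b l) * ((-(4⁻¹ : ℝ)) • π (b l) v)

theorem sum_comp_mul_smul_eq_of_sum_comp {ι V E : Type*} [Fintype ι]
    [AddCommGroup V] [Module ℝ V] [AddCommGroup E] [Module ℝ E]
    (A : E →ₗ[ℝ] V) (P : ι → V →ₗ[ℝ] E) (T : ι → Module.End ℝ V) (Q : V →ₗ[ℝ] E) (c μ : ℝ)
    (h : c • ∑ i, P i ∘ₗ T i = μ • Q) :
    ∑ i, (A ∘ₗ P i) * (c • T i) = μ • (A ∘ₗ Q) := by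
  rw [← LinearMap.comp_smul, ← h]
  ext x
  simp [Finset.smul_sum, LinearMap.sum_apply]

theorem clifford_hom_power_sum_general {n N : ℕ} {V E : Type*}
    [NormedAddCommGroup V] [InnerProductSpace ℝ V] [FiniteDimensional ℝ V]
    [NormedAddCommGroup E] [InnerProductSpace ℝ E] [FiniteDimensional ℝ E]
    (ι : V →ₗ[ℝ] EuclideanSpace ℝ (Fin n) →ₗ[ℝ] E)
    (b : OrthonormalBasis (Fin n) ℝ (EuclideanSpace ℝ (Fin n)))
    (π : EuclideanSpace ℝ (Fin n) →ₗ[ℝ] EuclideanSpace ℝ (Fin n) →ₗ[ℝ] Module.End ℝ V)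
    (Pr : Fin N → E →ₗ[ℝ] E) (m : Fin N → ℝ)
    (hcomp : ∀ u v : EuclideanSpace ℝ (Fin n),
      ∑ k, (LinearMap.adjoint (Pr k ∘ₗ ι.flip u)) ∘ₗ (Pr k ∘ₗ ι.flip v)
        = ⟪u, v⟫ • (LinearMap.id : V →ₗ[ℝ] V))
    (heig : ∀ k (u : EuclideanSpace ℝ (Fin n)),
      (-(4⁻¹ : ℝ)) • ∑ i, (Pr k ∘ₗ ι.flip (b i)) ∘ₗ (π (b i) u : V →ₗ[ℝ] V)
        = m k • (Pr k ∘ₗ ι.flip u)) :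
    ∀ (q : ℕ) (u v : EuclideanSpace ℝ (Fin n)),
      ∑ k, (m k) ^ q • ((LinearMap.adjoint (Pr k ∘ₗ ι.flip u)) ∘ₗ (Pr k ∘ₗ ι.flip v))
        = (cliffordR π b q u v : V →ₗ[ℝ] V) := by
  intro q
  induction q with
  | zero =>
    intro u v
    simpa [cliffordR, Module.End.one_eq_id] using hcomp u v
  | succ q ih =>
    intro u v
    calc ∑ k, m k ^ (q + 1) • (LinearMap.adjoint (Pr k ∘ₗ ι.flip u) ∘ₗ (Pr k ∘ₗ ι.flip v))
        = ∑ k, ∑ l, (m k ^ q • (LinearMap.adjoint (Pr k ∘ₗ ι.flip u) ∘ₗ (Pr k ∘ₗ ι.flip (b l))))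
            * ((-(4⁻¹ : ℝ)) • π (b l) v) := by
          refine Finset.sum_congr rfl fun k _ => ?_
          simp_rw [smul_mul_assoc, ← Finset.smul_sum,
            sum_comp_mul_smul_eq_of_sum_comp _ _ _ _ _ _ (heig k v), smul_smul, pow_succ]
      _ = ∑ l, (∑ k, m k ^ q • (LinearMap.adjoint (Pr k ∘ₗ ι.flip u) ∘ₗ (Pr k ∘ₗ ι.flip (b l))))
            * ((-(4⁻¹ : ℝ)) • π (b l) v) := by
          rw [Finset.sum_comm]
          simp_rw [Finset.sum_mul]
      _ = cliffordR π b (q + 1) u v := by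
          simp_rw [ih]
          rfl

/-- Under the same setup (completeness relation and eigenvector relation for
the Clifford homomorphisms `p_{λ_k}(u) = Pr k ∘ ι.flip u`, conformal weights `m k`),
for every `q ≥ 0` and all `u, v ∈ ℝⁿ`:
`Σ_k (m k)^q • (p_{λ_k}(u))* ∘ p_{λ_k}(v) = r^q_ρ(u,v)`. -/
theorem clifford_hom_power_sum {n N : ℕ} {V E : Type*}
    [NormedAddCommGroup V] [InnerProductSpace ℝ V] [FiniteDimensional ℝ V]
    [NormedAddCommGroup E] [InnerProductSpace ℝ E] [FiniteDimensional ℝ E]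
    (ι : V →ₗ[ℝ] EuclideanSpace ℝ (Fin n) →ₗ[ℝ] E)
    (b : OrthonormalBasis (Fin n) ℝ (EuclideanSpace ℝ (Fin n)))
    (π : EuclideanSpace ℝ (Fin n) →ₗ[ℝ] EuclideanSpace ℝ (Fin n) →ₗ[ℝ] Module.End ℝ V)
    (hanti : ∀ u v, π v u = -π u v)
    (Pr : Fin N → E →ₗ[ℝ] E) (m : Fin N → ℝ)
    (hcomp : ∀ u v : EuclideanSpace ℝ (Fin n),
      ∑ k, (LinearMap.adjoint (Pr k ∘ₗ ι.flip u)) ∘ₗ (Pr k ∘ₗ ι.flip v)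
        = ⟪u, v⟫ • (LinearMap.id : V →ₗ[ℝ] V))
    (heig : ∀ k (u : EuclideanSpace ℝ (Fin n)),
      (-(4⁻¹ : ℝ)) • ∑ i, (Pr k ∘ₗ ι.flip (b i)) ∘ₗ (π (b i) u : V →ₗ[ℝ] V)
        = m k • (Pr k ∘ₗ ι.flip u)) :
    ∀ (q : ℕ) (u v : EuclideanSpace ℝ (Fin n)),
      ∑ k, (m k) ^ q • ((LinearMap.adjoint (Pr k ∘ₗ ι.flip u)) ∘ₗ (Pr k ∘ₗ ι.flip v))
        = (cliffordR π b q u v : V →ₗ[ℝ] V) :=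
  clifford_hom_power_sum_general ι b π Pr m hcomp heig
end

section
/- For an irreducible representation (π_ρ, V_ρ) of spin(n) and the bilinear maps r^q_ρ defined by r^1_ρ(u,v) = -(1/4)π_ρ([u,v]) and r^2_ρ(u,v) = (1/16) Σ_l π_ρ([u,e_l]) π_ρ([e_l,v]), one has the identity r^2_ρ(u,v) - r^2_ρ(v,u) = (n-2) r^1_ρ(u,v) for all u,v ∈ R^n. -/
open scoped RealInnerProductSpace

/-- For a representation `π` of `spin(n)` on `V`, encoded as the bilinear
map `π u v = π_ρ([u,v])` (antisymmetric, and a Lie algebra homomorphism on `spin(n)`,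
i.e. satisfying `[π([u,v]), π([w,x])] = π([[u,v],[w,x]])` with
`[[u,v],[w,x]] = -4(⟪v,w⟫[u,x] - ⟪u,w⟫[v,x] - ⟪v,x⟫[u,w] + ⟪u,x⟫[v,w])`), the maps
`r¹(u,v) = -(1/4) π([u,v])` and `r²(u,v) = (1/16) Σ_l π([u,e_l]) π([e_l,v])` satisfy
`r²(u,v) - r²(v,u) = (n-2) r¹(u,v)` for all `u, v ∈ ℝⁿ`. -/
theorem r2_antisymmetrization {n : ℕ} {V : Type*} [AddCommGroup V] [Module ℝ V]
    (π : EuclideanSpace ℝ (Fin n) →ₗ[ℝ] EuclideanSpace ℝ (Fin n) →ₗ[ℝ] Module.End ℝ V)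
    (hanti : ∀ u v, π v u = -π u v)
    (hLie : ∀ u v w x,
      π u v * π w x - π w x * π u v
        = (-4 : ℝ) • (⟪v, w⟫ • π u x - ⟪u, w⟫ • π v x - ⟪v, x⟫ • π u w + ⟪u, x⟫ • π v w))
    (b : OrthonormalBasis (Fin n) ℝ (EuclideanSpace ℝ (Fin n))) :
    ∀ u v,
      ((16⁻¹ : ℝ) • ∑ l, π u (b l) * π (b l) v)
        - ((16⁻¹ : ℝ) • ∑ l, π v (b l) * π (b l) u)
      = ((n : ℝ) - 2) • ((-(4⁻¹ : ℝ)) • π u v) := by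
  intro u v
  have hdiag : ∀ l, π (b l) (b l) = 0 := by
    intro l
    have h := hanti (b l) (b l)
    have h2 : (2 : ℝ) • π (b l) (b l) = 0 := by
      rw [two_smul]
      nth_rewrite 1 [h]
      abel
    rcases smul_eq_zero.mp h2 with h' | h'
    · norm_num at h'
    · exact h'
  have hone : ∀ l, ⟪b l, b l⟫ = (1 : ℝ) := by
    intro l
    simpa using orthonormal_iff_ite.mp b.orthonormal l l
  have hu : ∑ l, ⟪u, b l⟫ • π (b l) v = π u v := by
    conv_rhs => rw [← b.sum_repr' u]
    rw [map_sum, LinearMap.sum_apply]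
    exact Finset.sum_congr rfl fun l _ => by
      rw [real_inner_comm u (b l), map_smul]; rfl
  have hv : ∑ l, ⟪b l, v⟫ • π u (b l) = π u v := by
    conv_rhs => rw [← b.sum_repr' v]
    rw [map_sum]
    exact Finset.sum_congr rfl fun l _ => by rw [map_smul]
  have key : ∀ l, π u (b l) * π (b l) v - π v (b l) * π (b l) u
      = (-4 : ℝ) • (⟪b l, b l⟫ • π u v - ⟪u, b l⟫ • π (b l) v
          - ⟪b l, v⟫ • π u (b l) + ⟪u, v⟫ • π (b l) (b l)) := by
    intro l
    rw [hanti (b l) v, hanti u (b l), neg_mul_neg]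
    exact hLie u (b l) (b l) v
  have hsum : (∑ l, π u (b l) * π (b l) v) - (∑ l, π v (b l) * π (b l) u)
      = (-4 : ℝ) • ((n : ℝ) • π u v - π u v - π u v + 0) := by
    rw [← Finset.sum_sub_distrib]
    simp_rw [key]
    rw [← Finset.smul_sum]
    congr 1
    rw [Finset.sum_add_distrib, Finset.sum_sub_distrib, Finset.sum_sub_distrib]
    rw [hu, hv]
    congr 1
    · congr 1
      simp_rw [hone, one_smul]
      rw [Finset.sum_const, Finset.card_univ, Fintype.card_fin,
        ← Nat.cast_smul_eq_nsmul ℝ]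
    · simp [hdiag]
  rw [← smul_sub, hsum, add_zero]
  module
end

section
/- Let H be a finite-dimensional inner product space, D_1, ..., D_N, D_0 linear operators from H to inner product spaces, and real constants m_0 < 0 < m_1 < ... < m_N (with m_k ≠ m_0). Suppose a self-adjoint operator R on H satisfies R + (-m_0) D_0*D_0 = Σ_{k=1}^N (m_0 m_k)/(m_0 - m_k) D̂_k* D̂_k, where D̂_k := √(1 - m_k/m_0) D_k, and suppose ⟨Rφ,φ⟩ ≥ c⟨φ,φ⟩ for some c > 0. Then the operator Δ := Σ_{k=1}^N D̂_k* D̂_k satisfies ⟨Δφ,φ⟩ ≥ ((m_0 - m_N)/(m_0 m_N)) · c · ⟨φ,φ⟩ for all φ ∈ H; in particular every eigenvalue of Δ is at least ((m_0-m_N)/(m_0 m_N)) c > 0. -/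
open scoped RealInnerProductSpace

/-- (Abstract eigenvalue estimate.) Let `H` be a finite-dimensional inner
product space, `D k : H → W k` (`k = 1, …, N`) and `D0 : H → W0` linear maps, and
`m0 < 0 < m 1 < … < m N` real constants. With `D̂ k := √(1 - m k / m0) • D k`, so that
`(D̂ k)* D̂ k = (1 - m k / m0) • (D k)* D k`, suppose a self-adjoint `R` satisfies
`R + (-m0) • D0* D0 = Σ_k (m0 m k)/(m0 - m k) • (D̂ k)* D̂ k` and
`⟪R φ, φ⟫ ≥ c ⟪φ, φ⟫` with `c > 0`. Then `Δ := Σ_k (D̂ k)* D̂ k` satisfies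
`⟪Δ φ, φ⟫ ≥ ((m0 - m N)/(m0 · m N)) c ⟪φ, φ⟫`; in particular every eigenvalue of `Δ`
is at least `((m0 - m N)/(m0 · m N)) c > 0`. -/
theorem abstract_first_eigenvalue_bound {N : ℕ} (hN : 0 < N)
    {H W0 : Type*} [NormedAddCommGroup H] [InnerProductSpace ℝ H] [FiniteDimensional ℝ H]
    [NormedAddCommGroup W0] [InnerProductSpace ℝ W0] [FiniteDimensional ℝ W0]
    {W : Fin N → Type*} [∀ k, NormedAddCommGroup (W k)]
    [∀ k, InnerProductSpace ℝ (W k)] [∀ k, FiniteDimensional ℝ (W k)]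
    (D : (k : Fin N) → H →ₗ[ℝ] W k) (D0 : H →ₗ[ℝ] W0)
    (m : Fin N → ℝ) (m0 : ℝ)
    (hm0 : m0 < 0) (hmpos : ∀ k, 0 < m k) (hmono : StrictMono m)
    (R : H →ₗ[ℝ] H) (hRsa : IsSelfAdjoint R)
    (hident : R + (-m0) • (LinearMap.adjoint D0 ∘ₗ D0)
      = ∑ k, ((m0 * m k) / (m0 - m k)) •
          ((1 - m k / m0) • (LinearMap.adjoint (D k) ∘ₗ D k)))
    (c : ℝ) (hc : 0 < c)
    (hR : ∀ φ : H, c * ⟪φ, φ⟫ ≤ ⟪R φ, φ⟫) :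
    (∀ φ : H,
      ((m0 - m ⟨N - 1, by omega⟩) / (m0 * m ⟨N - 1, by omega⟩)) * c * ⟪φ, φ⟫
        ≤ ⟪(∑ k, (1 - m k / m0) • (LinearMap.adjoint (D k) ∘ₗ D k)) φ, φ⟫) ∧
    (∀ (μ : ℝ) (φ : H), φ ≠ 0 →
      (∑ k, (1 - m k / m0) • (LinearMap.adjoint (D k) ∘ₗ D k)) φ = μ • φ →
      ((m0 - m ⟨N - 1, by omega⟩) / (m0 * m ⟨N - 1, by omega⟩)) * c ≤ μ) ∧
    0 < ((m0 - m ⟨N - 1, by omega⟩) / (m0 * m ⟨N - 1, by omega⟩)) * c := by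
  have hkN : N - 1 < N := by omega
  set kN : Fin N := ⟨N - 1, hkN⟩ with hkNdef
  have hmN : 0 < m kN := hmpos kN
  have hdN : m0 - m kN < 0 := by linarith
  have hmulN : m0 * m kN < 0 := mul_neg_of_neg_of_pos hm0 hmN
  set K : ℝ := (m0 - m kN) / (m0 * m kN) with hKdef
  set aN : ℝ := (m0 * m kN) / (m0 - m kN) with haNdef
  have hKpos : 0 < K := div_pos_of_neg_of_neg hdN hmulN
  have haN : 0 < aN := div_pos_of_neg_of_neg hmulN hdN
  have hKa : K * aN = 1 := by
    rw [hKdef, haNdef, div_mul_div_comm, div_eq_one_iff_eq (by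
      exact mul_ne_zero hmulN.ne (sub_ne_zero.mpr (by linarith : m0 ≠ m kN)))]
    ring
  have key : ∀ φ : H, K * c * ⟪φ, φ⟫
      ≤ ⟪(∑ k, (1 - m k / m0) • (LinearMap.adjoint (D k) ∘ₗ D k)) φ, φ⟫ := by
    intro φ
    set q : Fin N → ℝ := fun k => (1 - m k / m0) * ⟪D k φ, D k φ⟫ with hqdef
    have hq : ∀ k, 0 ≤ q k := by
      intro k
      have h1 : (0:ℝ) ≤ 1 - m k / m0 := by
        have : m k / m0 < 0 := div_neg_of_pos_of_neg (hmpos k) hm0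
        linarith
      exact mul_nonneg h1 real_inner_self_nonneg
    have h1 : ⟪(∑ k, (1 - m k / m0) • (LinearMap.adjoint (D k) ∘ₗ D k)) φ, φ⟫
        = ∑ k, q k := by
      rw [LinearMap.sum_apply, sum_inner]
      refine Finset.sum_congr rfl fun k _ => ?_
      simp [real_inner_smul_left, LinearMap.adjoint_inner_left, hqdef]
    have h2 : ⟪R φ, φ⟫ + (-m0) * ⟪D0 φ, D0 φ⟫
        = ∑ k, (m0 * m k / (m0 - m k)) * q k := by
      have := congrArg (fun T : H →ₗ[ℝ] H => ⟪T φ, φ⟫) hident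
      simpa [LinearMap.sum_apply, sum_inner, real_inner_smul_left,
        inner_add_left, inner_neg_left, neg_mul,
        LinearMap.adjoint_inner_left, hqdef, mul_assoc] using this
    have h3 : ∑ k, (m0 * m k / (m0 - m k)) * q k ≤ aN * ∑ k, q k := by
      rw [Finset.mul_sum]
      refine Finset.sum_le_sum fun k _ => ?_
      refine mul_le_mul_of_nonneg_right ?_ (hq k)
      have hk : m k ≤ m kN := by
        refine hmono.monotone ?_
        exact Fin.mk_le_mk.mpr (by omega) |>.trans_eq rfl
      have hdk : m0 - m k < 0 := by linarith [hmpos k]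
      rw [haNdef, div_le_iff_of_neg hdk, div_mul_eq_mul_div, div_le_iff_of_neg hdN]
      nlinarith [sq_nonneg m0]
    have h4 : c * ⟪φ, φ⟫ ≤ aN * ∑ k, q k := by
      have hD0 : 0 ≤ (-m0) * ⟪D0 φ, D0 φ⟫ :=
        mul_nonneg (by linarith) real_inner_self_nonneg
      linarith [hR φ]
    have h5 : K * (aN * ∑ k, q k) = ∑ k, q k := by
      rw [← mul_assoc, hKa, one_mul]
    rw [h1]
    calc K * c * ⟪φ, φ⟫ = K * (c * ⟪φ, φ⟫) := by ring
      _ ≤ K * (aN * ∑ k, q k) := by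
          exact mul_le_mul_of_nonneg_left h4 hKpos.le
      _ = ∑ k, q k := h5
  refine ⟨fun φ => key φ, fun μ φ hφ heig => ?_, mul_pos hKpos hc⟩
  have hip : (0:ℝ) < ⟪φ, φ⟫ :=
    lt_of_le_of_ne real_inner_self_nonneg
      (fun h => hφ ((@inner_self_eq_zero ℝ _ _ _ _ φ).mp h.symm))
  have := key φ
  rw [heig, real_inner_smul_left] at this
  exact le_of_mul_le_mul_right (by linarith) hip
end
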